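/- Let G = Q₈ and let s ∈ {σ, τ, στ}, and choose t ∈ {σ, τ, στ} with t ≠ s. The subgroup D_{s,λ} = ⟨λ(s), λ(t)ρ(s)⟩ of Perm(G) is isomorphic to the dihedral group of order 8, and it does not depend on the choice of t. -/

import Mathlib

abbrev G : Type := QuaternionGroup 2
def σ : G := QuaternionGroup.a 1
def τ : G := QuaternionGroup.xa 0
def lam (g : G) : Equiv.Perm G := Equiv.mulLeft g
def rho (g : G) : Equiv.Perm G := Equiv.mulRight g⁻¹
def Est (s t : G) : Subgroup (Equiv.Perm G) :=
  Subgroup.closure {lam s * rho t, lam (s^2), lam t * rho (s*t)}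
def Ast (s t : G) : Subgroup (Equiv.Perm G) :=
  Subgroup.closure {lam s, rho t}
def eta (s t : G) : Equiv.Perm G :=
  List.formPerm [1, s, t, (s*t)⁻¹, s^2, s⁻¹, t⁻¹, s*t]
def Cst (s t : G) : Subgroup (Equiv.Perm G) :=
  Subgroup.closure {eta s t}
def Dsl (s t : G) : Subgroup (Equiv.Perm G) :=
  Subgroup.closure {lam s, lam t * rho s}
def Dsr (s t : G) : Subgroup (Equiv.Perm G) :=
  Subgroup.closure {rho s, lam s * rho t}
def lamG : Subgroup (Equiv.Perm G) := Subgroup.closure (Set.range lam)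
def rhoG : Subgroup (Equiv.Perm G) := Subgroup.closure (Set.range rho)
/-- `f` is `G`-equivariant for the conjugation action of `G` via `lam`. -/
def Equivariant {N₁ N₂ : Subgroup (Equiv.Perm G)} (f : N₁ ≃* N₂) : Prop :=
  ∀ (g : G) (η : Equiv.Perm G) (hη : η ∈ N₁) (hη' : lam g * η * (lam g)⁻¹ ∈ N₁),
    (f ⟨lam g * η * (lam g)⁻¹, hη'⟩ : Equiv.Perm G)
      = lam g * (f ⟨η, hη⟩ : Equiv.Perm G) * (lam g)⁻¹

/-
`λ(s)` has order 4, and `x = λ(t)ρ(s)` is an involution because `t² = s²` is central in `Q₈`.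
Since left and right translations commute, conjugation by `x` acts on `λ(s)` as conjugation by
`t` does on `s`, i.e. inverts it. Finally `x` is not a left translation because `s` is not
central, so `x ∉ ⟨λ(s)⟩` and the presentation of the dihedral group gives `⟨λ(s), x⟩ ≅ D₈`.
The other admissible choice of `t` is `±st`, which multiplies `x` by a power of `λ(s)` and so
does not change the generated subgroup.
-/
section DihedralPresentation

variable {M : Type*} [Group M] {a x : M}

lemma pow_mul_eq_mul_inv_pow (hx : x ^ 2 = 1) (hrel : x * a * x⁻¹ = a⁻¹) (k : ℕ) :
    a ^ k * x = x * (a ^ k)⁻¹ := by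
  have hxinv : x⁻¹ = x := inv_eq_of_mul_eq_one_right (by rw [← sq, hx])
  have hconj : x * a ^ k * x⁻¹ = (a ^ k)⁻¹ := by rw [conj_pow.symm, hrel, inv_pow]
  rw [← hconj, hxinv, ← mul_assoc, ← mul_assoc, ← sq, hx, one_mul]

variable {n : ℕ} [NeZero n]

lemma pow_zmod_val_add (ha : a ^ n = 1) (i j : ZMod n) :
    a ^ (i + j).val = a ^ i.val * a ^ j.val := by
  rw [← pow_add, ZMod.val_add, ← pow_eq_pow_mod _ ha]

lemma pow_zmod_val_neg (ha : a ^ n = 1) (i : ZMod n) : a ^ (-i).val = (a ^ i.val)⁻¹ :=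
  eq_inv_of_mul_eq_one_left <| by
    rw [← pow_zmod_val_add ha, neg_add_cancel, ZMod.val_zero, pow_zero]

namespace DihedralGroup

def lift (ha : a ^ n = 1) (hx : x ^ 2 = 1) (hrel : x * a * x⁻¹ = a⁻¹) : DihedralGroup n →* M where
  toFun
    | r i => a ^ i.val
    | sr i => x * a ^ i.val
  map_one' := by
    change a ^ (0 : ZMod n).val = 1
    rw [ZMod.val_zero, pow_zero]
  map_mul' := by
    have swap (i : ZMod n) : a ^ i.val * x = x * a ^ (-i).val := by
      rw [pow_mul_eq_mul_inv_pow hx hrel, pow_zmod_val_neg ha]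
    rintro (i | i) (j | j)
    · simp only [r_mul_r, pow_zmod_val_add ha]
    · simp only [r_mul_sr]
      rw [← mul_assoc, swap, mul_assoc, ← pow_zmod_val_add ha, neg_add_eq_sub]
    · simp only [sr_mul_r, pow_zmod_val_add ha, mul_assoc]
    · simp only [sr_mul_sr]
      rw [mul_assoc x, ← mul_assoc (a ^ i.val), swap, ← mul_assoc, ← mul_assoc, ← sq, hx, one_mul,
        ← pow_zmod_val_add ha, neg_add_eq_sub]

variable (ha : a ^ n = 1) (hx : x ^ 2 = 1) (hrel : x * a * x⁻¹ = a⁻¹)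

@[simp] lemma lift_r (i : ZMod n) : lift ha hx hrel (r i) = a ^ i.val := rfl

@[simp] lemma lift_sr (i : ZMod n) : lift ha hx hrel (sr i) = x * a ^ i.val := rfl

lemma range_lift : (lift ha hx hrel).range = Subgroup.closure {a, x} := by
  have ha_mem : a ∈ Subgroup.closure {a, x} := Subgroup.subset_closure (by simp)
  have hx_mem : x ∈ Subgroup.closure {a, x} := Subgroup.subset_closure (by simp)
  apply le_antisymm
  · rintro _ ⟨i | i, rfl⟩
    · exact pow_mem ha_mem _
    · exact mul_mem hx_mem (pow_mem ha_mem _)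
  · rw [Subgroup.closure_le, Set.insert_subset_iff, Set.singleton_subset_iff]
    refine ⟨⟨r 1, ?_⟩, ⟨sr 0, by simp⟩⟩
    rw [lift_r, ZMod.val_one_eq_one_mod, ← pow_eq_pow_mod _ ha, pow_one]

lemma lift_injective (hord : orderOf a = n) (hxa : x ∉ Subgroup.zpowers a) :
    Function.Injective (lift ha hx hrel) := by
  rw [injective_iff_map_eq_one]
  rintro (i | i) h
  · rw [lift_r] at h
    have hdvd : orderOf a ∣ i.val := orderOf_dvd_of_pow_eq_one h
    rw [hord] at hdvd
    have hi : i.val = 0 := Nat.eq_zero_of_dvd_of_lt hdvd (ZMod.val_lt i)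
    rw [(ZMod.val_eq_zero i).1 hi, r_zero]
  · rw [lift_sr, mul_eq_one_iff_eq_inv] at h
    exact absurd (h ▸ inv_mem (Subgroup.npow_mem_zpowers a _)) hxa

end DihedralGroup

theorem nonempty_closure_pair_mulEquiv_dihedralGroup (hord : orderOf a = n) (hx : x ^ 2 = 1)
    (hrel : x * a * x⁻¹ = a⁻¹) (hxa : x ∉ Subgroup.zpowers a) :
    Nonempty (Subgroup.closure {a, x} ≃* DihedralGroup n) := by
  have ha : a ^ n = 1 := hord ▸ pow_orderOf_eq_one a
  exact ⟨(MulEquiv.subgroupCongr (DihedralGroup.range_lift ha hx hrel).symm).trans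
    (MonoidHom.ofInjective (DihedralGroup.lift_injective ha hx hrel hord hxa)).symm⟩

end DihedralPresentation

theorem Subgroup.closure_pair_pow_mul {M : Type*} [Group M] (a b : M) (k : ℕ) :
    closure {a, a ^ k * b} = closure {a, b} := by
  have key (c d : M) (l : ℤ) : closure {c, c ^ l * d} ≤ closure {c, d} := by
    rw [closure_le, Set.insert_subset_iff, Set.singleton_subset_iff]
    have hc : c ∈ closure {c, d} := subset_closure (by simp)
    exact ⟨hc, mul_mem (zpow_mem hc l) (subset_closure (by simp))⟩
  refine le_antisymm (by exact_mod_cast key a b k) ?_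
  simpa [← mul_assoc, ← zpow_add] using key a (a ^ k * b) (-k)

open Subgroup

lemma lam_mul (g h : G) : lam (g * h) = lam g * lam h := Equiv.mulLeft_mul g h

lemma lam_pow (g : G) (k : ℕ) : lam (g ^ k) = lam g ^ k := (Equiv.pow_mulLeft g k).symm

lemma lam_zpow (g : G) (k : ℤ) : lam (g ^ k) = lam g ^ k := (Equiv.zpow_mulLeft g k).symm

lemma lam_inv (g : G) : lam g⁻¹ = (lam g)⁻¹ := (Equiv.inv_mulLeft g).symm

lemma orderOf_lam (g : G) : orderOf (lam g) = orderOf g :=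
  orderOf_injective (MulAction.toPermHom G G) MulAction.toPerm_injective g

lemma lam_mul_rho_conj_lam (t h g : G) :
    lam t * rho h * lam g * (lam t * rho h)⁻¹ = lam (t * g * t⁻¹) := by
  ext x; simp [lam, rho, mul_assoc]

lemma rho_pow (g : G) (k : ℕ) : rho (g ^ k) = rho g ^ k := by
  rw [rho, rho, Equiv.pow_mulRight, inv_pow]

lemma lam_commute_rho (g h : G) : Commute (lam g) (rho h) :=
  Equiv.ext fun x => (mul_assoc g x h⁻¹).symm

lemma lam_mul_rho_self_of_mem_center {z : G} (hz : z ∈ center G) : lam z * rho z = 1 := by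
  ext x
  change z * (x * z⁻¹) = x
  rw [← mul_assoc, ← mem_center_iff.1 hz x, mul_inv_cancel_right]

lemma sq_lam_mul_rho_eq_one {s t : G} (hst : t ^ 2 = s ^ 2) (hc : s ^ 2 ∈ center G) :
    (lam t * rho s) ^ 2 = 1 := by
  rw [(lam_commute_rho t s).mul_pow, ← lam_pow, ← rho_pow, hst]
  exact lam_mul_rho_self_of_mem_center hc

lemma lam_mul_rho_ne_lam {s : G} (hs : s ∉ center G) (t g : G) : lam t * rho s ≠ lam g := by
  intro h
  have happ (y : G) : t * (y * s⁻¹) = g * y := Equiv.congr_fun h y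
  have hg : g = t * s⁻¹ := by simpa using (happ 1).symm
  refine hs (inv_mem_iff.1 (mem_center_iff.2 fun y => mul_left_cancel (a := t) ?_))
  rw [happ, hg, mul_assoc]

lemma lam_mul_rho_notMem_zpowers_lam {s : G} (hs : s ∉ center G) (t : G) :
    lam t * rho s ∉ zpowers (lam s) := by
  rintro ⟨k, hk⟩
  exact lam_mul_rho_ne_lam hs t (s ^ k) ((lam_zpow s k).trans hk).symm

lemma Dsl_pow_mul (s t : G) (k : ℕ) : Dsl s (s ^ k * t) = Dsl s t := by
  rw [Dsl, Dsl, lam_mul, lam_pow, mul_assoc, closure_pair_pow_mul]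

section Quaternion

variable {s t : G}

lemma orderOf_eq_four_of_mem (hs : s ∈ ({σ, τ, σ * τ} : Set G)) : orderOf s = 4 := by
  rcases hs with rfl | rfl | rfl <;>
    simp [σ, τ, QuaternionGroup.orderOf_xa, QuaternionGroup.orderOf_a_one]

lemma sq_eq_sq_of_mem (hs : s ∈ ({σ, τ, σ * τ} : Set G)) (ht : t ∈ ({σ, τ, σ * τ} : Set G)) :
    t ^ 2 = s ^ 2 := by
  rcases hs with rfl | rfl | rfl <;> rcases ht with rfl | rfl | rfl <;> decide

lemma sq_mem_center_of_mem (hs : s ∈ ({σ, τ, σ * τ} : Set G)) : s ^ 2 ∈ center G := by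
  rcases hs with rfl | rfl | rfl <;> decide

lemma notMem_center_of_mem (hs : s ∈ ({σ, τ, σ * τ} : Set G)) : s ∉ center G := by
  rcases hs with rfl | rfl | rfl <;> decide

lemma conj_eq_inv_of_mem (hs : s ∈ ({σ, τ, σ * τ} : Set G)) (ht : t ∈ ({σ, τ, σ * τ} : Set G))
    (hne : t ≠ s) : t * s * t⁻¹ = s⁻¹ := by
  rcases hs with rfl | rfl | rfl <;> rcases ht with rfl | rfl | rfl <;>
    first | exact absurd rfl hne | decide

lemma exists_eq_pow_mul_of_mem {t' : G} (hs : s ∈ ({σ, τ, σ * τ} : Set G))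
    (ht : t ∈ ({σ, τ, σ * τ} : Set G)) (ht' : t' ∈ ({σ, τ, σ * τ} : Set G)) (hne : t ≠ s)
    (hne' : t' ≠ s) : ∃ k : Fin 4, t' = s ^ (k : ℕ) * t := by
  rcases hs with rfl | rfl | rfl <;> rcases ht with rfl | rfl | rfl <;>
    rcases ht' with rfl | rfl | rfl <;>
    first | exact absurd rfl hne | exact absurd rfl hne' | decide

end Quaternion

theorem stmt8 (s : G) (hs : s ∈ ({σ, τ, σ * τ} : Set G)) :
    ∀ t ∈ ({σ, τ, σ * τ} : Set G), t ≠ s →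
      Nonempty (↥(Dsl s t) ≃* DihedralGroup 4) ∧
        (∀ t' ∈ ({σ, τ, σ * τ} : Set G), t' ≠ s → Dsl s t = Dsl s t') := by
  intro t ht hne
  refine ⟨?_, fun t' ht' hne' => ?_⟩
  · have hord : orderOf (lam s) = 4 := (orderOf_lam s).trans (orderOf_eq_four_of_mem hs)
    have hsq := sq_lam_mul_rho_eq_one (sq_eq_sq_of_mem hs ht) (sq_mem_center_of_mem hs)
    have hinv : lam t * rho s * lam s * (lam t * rho s)⁻¹ = (lam s)⁻¹ := by
      rw [lam_mul_rho_conj_lam, conj_eq_inv_of_mem hs ht hne, lam_inv]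
    exact nonempty_closure_pair_mulEquiv_dihedralGroup hord hsq hinv
      (lam_mul_rho_notMem_zpowers_lam (notMem_center_of_mem hs) t)
  · obtain ⟨k, rfl⟩ := exists_eq_pow_mul_of_mem hs ht ht' hne hne'
    exact (Dsl_pow_mul s t k).symm
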